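/- Let ℋ𝒱 = ℂ[∂]L ⊕ ℂ[∂]M with [L_λ L] = (∂+2λ)L, [L_λ M] = (∂+λ)M, [M_λ L] = λM, [M_λ M] = 0. For Δ, α, β ∈ ℂ, the rank-1 free ℂ[∂]-module V = ℂ[∂]v with actions L_λ v = (∂+α+Δλ)v and M_λ v = βv is a conformal module over ℋ𝒱, i.e., it satisfies a_λ(b_μ v) − b_μ(a_λ v) = [a_λ b]_{λ+μ}v for all a, b ∈ {L, M}. -/

import Mathlib

open MvPolynomial

namespace Stmt17

/-- Polynomials in `∂` (`X 0`), `λ` (`X 1`) and `μ` (`X 2`). -/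
abbrev P := MvPolynomial (Fin 3) ℂ

/-- Substitute `p` for `∂` (that is, for `X 0`). -/
noncomputable def subD (p : P) : P →ₐ[ℂ] P := aeval ![p, X 1, X 2]

/-- Elements of the rank-1 module `V = ℂ[∂]v` are recorded by their coefficient
polynomial `p(∂)`, i.e. `p(∂)v`. By the module axiom `a_λ(∂v) = (∂+λ)a_λ v`,
the action `L_λ(p(∂)v) = p(∂+λ)(∂+α+Δλ)v`. -/
noncomputable def Lact (α Δ : ℂ) (l p : P) : P :=
  subD (X 0 + l) p * (X 0 + C α + C Δ * l)

/-- `M_λ(p(∂)v) = p(∂+λ)·β v`. -/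
noncomputable def Mact (β : ℂ) (l p : P) : P := subD (X 0 + l) p * C β

theorem subD_X_zero (p : P) : subD p (X 0) = p := by
  simp [subD]

theorem subD_X_of_ne_zero (p : P) {i : Fin 3} (hi : i ≠ 0) : subD p (X i) = X i := by
  fin_cases i <;> simp_all [subD]

theorem subD_C (p : P) (a : ℂ) : subD p (C a) = C a :=
  (subD p).commutes a

theorem Lact_one (α Δ : ℂ) (l : P) : Lact α Δ l 1 = X 0 + C α + C Δ * l := by
  rw [Lact, map_one, one_mul]

theorem Mact_one (β : ℂ) (l : P) : Mact β l 1 = C β := by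
  rw [Mact, map_one, one_mul]

theorem Lact_Lact_one (α Δ : ℂ) (l : P) {i : Fin 3} (hi : i ≠ 0) :
    Lact α Δ l (Lact α Δ (X i) 1) =
      (X 0 + l + C α + C Δ * X i) * (X 0 + C α + C Δ * l) := by
  rw [Lact_one, Lact]
  simp only [map_add, map_mul, subD_X_zero, subD_C, subD_X_of_ne_zero _ hi]

theorem Lact_Mact_one (α Δ β : ℂ) (l m : P) :
    Lact α Δ l (Mact β m 1) = C β * (X 0 + C α + C Δ * l) := by
  rw [Mact_one, Lact, subD_C]

theorem Mact_Lact_one (α Δ β : ℂ) (l : P) {i : Fin 3} (hi : i ≠ 0) :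
    Mact β l (Lact α Δ (X i) 1) = (X 0 + l + C α + C Δ * X i) * C β := by
  rw [Lact_one, Mact]
  simp only [map_add, map_mul, subD_X_zero, subD_C, subD_X_of_ne_zero _ hi]

theorem Mact_Mact_one (β : ℂ) (l m : P) : Mact β l (Mact β m 1) = C β * C β := by
  rw [Mact_one, Mact, subD_C]

/-- `V = ℂ[∂]v` with `L_λ v = (∂+α+Δλ)v`, `M_λ v = βv` is a conformal module over
the Heisenberg-Virasoro conformal algebra: the compatibility
`a_λ(b_μ v) − b_μ(a_λ v) = [a_λ b]_{λ+μ} v` holds for all `a, b ∈ {L, M}`, where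
`[L_λ L] = (∂+2λ)L`, `[L_λ M] = (∂+λ)M`, `[M_λ L] = λM`, `[M_λ M] = 0`, and
`[(∂+cλ)a]_{ν} v = (−ν+cλ)(a_ν v)`. -/
theorem stmt_17 (α Δ β : ℂ) :
    -- L, L : [L_λ L]_{λ+μ} v = (−(λ+μ)+2λ)·L_{λ+μ} v = (λ−μ)(∂+α+Δ(λ+μ))v
    (Lact α Δ (X 1) (Lact α Δ (X 2) 1) - Lact α Δ (X 2) (Lact α Δ (X 1) 1)
      = (X 1 - X 2) * (X 0 + C α + C Δ * (X 1 + X 2))) ∧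
    -- L, M : [L_λ M]_{λ+μ} v = (−(λ+μ)+λ)·M_{λ+μ} v = −μβ v
    (Lact α Δ (X 1) (Mact β (X 2) 1) - Mact β (X 2) (Lact α Δ (X 1) 1)
      = (-(X 1 + X 2) + X 1) * C β) ∧
    -- M, L : [M_λ L]_{λ+μ} v = λ·M_{λ+μ} v = λβ v
    (Mact β (X 1) (Lact α Δ (X 2) 1) - Lact α Δ (X 2) (Mact β (X 1) 1)
      = X 1 * C β) ∧
    -- M, M : [M_λ M]_{λ+μ} v = 0
    (Mact β (X 1) (Mact β (X 2) 1) - Mact β (X 2) (Mact β (X 1) 1) = 0) := by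
  refine ⟨?_, ?_, ?_, ?_⟩
  · rw [Lact_Lact_one (hi := by decide), Lact_Lact_one (hi := by decide)]; ring
  · rw [Lact_Mact_one, Mact_Lact_one (hi := by decide)]; ring
  · rw [Mact_Lact_one (hi := by decide), Lact_Mact_one]; ring
  · rw [Mact_Mact_one, Mact_Mact_one, sub_self]

end Stmt17
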